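/- Let I and O be vector sequences in R^d of equal size m > 0 with means μ_I, μ_O and suppose additionally ‖σ²_I‖ and ‖σ²_O‖ (componentwise variances) are bounded by some M, and ‖μ_O − μ_I‖ > L with L > 2√(2M). Then the combined (componentwise) variance satisfies ‖σ²_IO − (1/4)(μ_O − μ_I)⊙(μ_O − μ_I)‖ ≤ M, where ⊙ is the componentwise product; in particular the cross-batch mean separation term (1/4)(μ_O−μ_I)² dominates the combined variance. -/

import Mathlib

/-!
Coordinatewise, the mixed batch is the concatenation of two samples of equal size. By the
parallel-axis identity `∑ (aᵢ - c)² = ∑ (aᵢ - ā)² + n (ā - c)²`, taken about the mixed mean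
`(μ_I + μ_O) / 2`, each half contributes its own variance plus `((μ_O - μ_I) / 2)²`, so
`σ²_IO - ¼ (μ_O - μ_I)² = ½ (σ²_I + σ²_O)`, whose norm is at most `M`.
-/

open Finset

theorem Fin.apply_append {α β : Type*} {m n : ℕ} (f : α → β) (u : Fin m → α) (v : Fin n → α)
    (i : Fin (m + n)) : f (Fin.append u v i) = Fin.append (f ∘ u) (f ∘ v) i := by
  refine Fin.addCases (fun i => ?_) (fun i => ?_) i <;> simp

noncomputable section

variable {ι : Type*} [Fintype ι]

def sampleMean (a : ι → ℝ) : ℝ := (Fintype.card ι : ℝ)⁻¹ * ∑ i, a i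

def sampleVariance (a : ι → ℝ) : ℝ := (Fintype.card ι : ℝ)⁻¹ * ∑ i, (a i - sampleMean a) ^ 2

theorem sum_sub_sampleMean (a : ι → ℝ) : ∑ i, (a i - sampleMean a) = 0 := by
  rcases isEmpty_or_nonempty ι with hι | hι
  · simp
  rw [sum_sub_distrib, sum_const, card_univ, nsmul_eq_mul, sampleMean,
    mul_inv_cancel_left₀ (by positivity), sub_self]

theorem sum_sq_sub_eq_sum_sq_sub_sampleMean_add (a : ι → ℝ) (c : ℝ) :
    ∑ i, (a i - c) ^ 2 =
      ∑ i, (a i - sampleMean a) ^ 2 + Fintype.card ι * (sampleMean a - c) ^ 2 := by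
  have h : ∀ i, (a i - c) ^ 2 = (a i - sampleMean a) ^ 2
      + 2 * (sampleMean a - c) * (a i - sampleMean a) + (sampleMean a - c) ^ 2 := fun i => by ring
  simp_rw [h, sum_add_distrib, ← mul_sum, sum_sub_sampleMean, sum_const, card_univ, nsmul_eq_mul]
  ring

end

theorem sampleMean_append {m : ℕ} (a b : Fin m → ℝ) :
    sampleMean (Fin.append a b) = (sampleMean a + sampleMean b) / 2 := by
  simp only [sampleMean, Fin.sum_univ_add, Fin.append_left, Fin.append_right, Fintype.card_fin,
    Nat.cast_add]
  rw [← two_mul, mul_inv]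
  ring

theorem sampleVariance_append {m : ℕ} (hm : m ≠ 0) (a b : Fin m → ℝ) :
    sampleVariance (Fin.append a b) =
      (sampleVariance a + sampleVariance b) / 2 + (sampleMean b - sampleMean a) ^ 2 / 4 := by
  have hm' : (m : ℝ) ≠ 0 := Nat.cast_ne_zero.mpr hm
  rw [sampleVariance, Fin.sum_univ_add]
  simp only [Fin.append_left, Fin.append_right]
  rw [sampleMean_append, sum_sq_sub_eq_sum_sq_sub_sampleMean_add a,
    sum_sq_sub_eq_sum_sq_sub_sampleMean_add b]
  simp only [sampleVariance, Fintype.card_fin, Nat.cast_add]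
  field_simp
  ring

theorem mixed_variance_dominated_by_mean_gap_general (d m : ℕ) (hm : 0 < m) (M : ℝ)
    (I O : Fin m → EuclideanSpace ℝ (Fin d))
    (μI μO μIO σI2 σO2 σIO2 had : EuclideanSpace ℝ (Fin d))
    (hμI : μI = (m : ℝ)⁻¹ • ∑ i, I i)
    (hμO : μO = (m : ℝ)⁻¹ • ∑ i, O i)
    (hμIO : μIO = ((2 * m : ℝ))⁻¹ • ∑ i : Fin (m + m), Fin.append I O i)
    (hσI : ∀ j, σI2 j = (m : ℝ)⁻¹ * ∑ i, (I i j - μI j) ^ 2)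
    (hσO : ∀ j, σO2 j = (m : ℝ)⁻¹ * ∑ i, (O i j - μO j) ^ 2)
    (hσIO : ∀ j, σIO2 j =
      ((2 * m : ℝ))⁻¹ * ∑ i : Fin (m + m), (Fin.append I O i j - μIO j) ^ 2)
    (hhad : ∀ j, had j = (μO j - μI j) * (μO j - μI j))
    (hMI : ‖σI2‖ ≤ M) (hMO : ‖σO2‖ ≤ M) :
    ‖σIO2 - (1 / 4 : ℝ) • had‖ ≤ M := by
  have happend : ∀ j i, Fin.append I O i j = Fin.append (I · j) (O · j) i := fun j =>
    Fin.apply_append (fun x : EuclideanSpace ℝ (Fin d) => x j) I O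
  have hcoord : ∀ j, σIO2 j - had j / 4 = (σI2 j + σO2 j) / 2 := by
    intro j
    have hμI' : μI j = sampleMean (I · j) := by simp [hμI, sampleMean]
    have hμO' : μO j = sampleMean (O · j) := by simp [hμO, sampleMean]
    have hμIO' : μIO j = sampleMean (Fin.append (I · j) (O · j)) := by
      simp [hμIO, sampleMean, happend, two_mul]
    have hσI' : σI2 j = sampleVariance (I · j) := by simp [hσI, sampleVariance, hμI']
    have hσO' : σO2 j = sampleVariance (O · j) := by simp [hσO, sampleVariance, hμO']
    have hσIO' : σIO2 j = sampleVariance (Fin.append (I · j) (O · j)) := by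
      simp [hσIO, sampleVariance, hμIO', happend, two_mul]
    rw [hhad, hσI', hσO', hσIO', sampleVariance_append hm.ne', hμI', hμO']
    ring
  have hsplit : σIO2 - (1 / 4 : ℝ) • had = (1 / 2 : ℝ) • (σI2 + σO2) := by
    ext j
    simp only [PiLp.sub_apply, PiLp.smul_apply, PiLp.add_apply, smul_eq_mul]
    linarith [hcoord j]
  calc ‖σIO2 - (1 / 4 : ℝ) • had‖ = (1 / 2) * ‖σI2 + σO2‖ := by
        rw [hsplit, norm_smul, Real.norm_of_nonneg (by norm_num)]
    _ ≤ (1 / 2) * (‖σI2‖ + ‖σO2‖) := by gcongr; exact norm_add_le _ _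
    _ ≤ M := by linarith

/-- For faraway OODs the mixed-batch componentwise variance is dominated by the
mean-gap term: if the componentwise variances of `I` and `O` are bounded by `M`
and `‖μ_O - μ_I‖ > L > 2√(2M)`, then the combined componentwise variance
deviates from `(1/4)(μ_O - μ_I) ⊙ (μ_O - μ_I)` by at most `M`. -/
theorem mixed_variance_dominated_by_mean_gap (d m : ℕ) (hm : 0 < m) (M L : ℝ)
    (I O : Fin m → EuclideanSpace ℝ (Fin d))
    (μI μO μIO σI2 σO2 σIO2 had : EuclideanSpace ℝ (Fin d))
    (hμI : μI = (m : ℝ)⁻¹ • ∑ i, I i)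
    (hμO : μO = (m : ℝ)⁻¹ • ∑ i, O i)
    (hμIO : μIO = ((2 * m : ℝ))⁻¹ • ∑ i : Fin (m + m), Fin.append I O i)
    (hσI : ∀ j, σI2 j = (m : ℝ)⁻¹ * ∑ i, (I i j - μI j) ^ 2)
    (hσO : ∀ j, σO2 j = (m : ℝ)⁻¹ * ∑ i, (O i j - μO j) ^ 2)
    (hσIO : ∀ j, σIO2 j =
      ((2 * m : ℝ))⁻¹ * ∑ i : Fin (m + m), (Fin.append I O i j - μIO j) ^ 2)
    (hhad : ∀ j, had j = (μO j - μI j) * (μO j - μI j))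
    (hMI : ‖σI2‖ ≤ M) (hMO : ‖σO2‖ ≤ M)
    (hL : L > 2 * Real.sqrt (2 * M))
    (hfar : ‖μO - μI‖ > L) :
    ‖σIO2 - (1 / 4 : ℝ) • had‖ ≤ M :=
  mixed_variance_dominated_by_mean_gap_general d m hm M I O μI μO μIO σI2 σO2 σIO2 had hμI hμO hμIO
    hσI hσO hσIO hhad hMI hMO
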